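/- For every variable j ∈ {1,…,d}, the global uniqueness Shapley value satisfies the bracketing inequality 𝓗({j})/d ≤ φ^{1:n}_j ≤ 𝓗({1,…,d}). -/

import Mathlib

open Finset

variable {n d : ℕ} {X : Fin d → Type} [∀ j, Fintype (X j)] [∀ j, DecidableEq (X j)]

/-- Number of subjects matching subject `t` on every variable in `u`. -/
def cohortN (x : Fin n → ∀ j, X j) (t : Fin n) (u : Finset (Fin d)) : ℕ :=
  (Finset.univ.filter fun i => ∀ j ∈ u, x i j = x t j).card

/-- Value function `val_t(u) = -log₂(N_t(u)/n)`. -/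
noncomputable def uVal (x : Fin n → ∀ j, X j) (t : Fin n) (u : Finset (Fin d)) : ℝ :=
  -Real.logb 2 ((cohortN x t u : ℝ) / n)

/-- Uniqueness Shapley value of variable `j` for subject `t`. -/
noncomputable def uShap (x : Fin n → ∀ j, X j) (t : Fin n) (j : Fin d) : ℝ :=
  (d : ℝ)⁻¹ * ∑ u ∈ ((Finset.univ : Finset (Fin d)).erase j).powerset,
    ((d - 1).choose u.card : ℝ)⁻¹ * (uVal x t (insert j u) - uVal x t u)

/-- Global uniqueness Shapley value. -/
noncomputable def uShapGlobal (x : Fin n → ∀ j, X j) (j : Fin d) : ℝ :=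
  (n : ℝ)⁻¹ * ∑ t, uShap x t j

/-- Marginal empirical probability of observing `z` on the variables in `u`. -/
noncomputable def margP (x : Fin n → ∀ j, X j) (u : Finset (Fin d))
    (z : ∀ j : u, X j.1) : ℝ :=
  ((Finset.univ.filter fun i : Fin n => ∀ j : u, x i j.1 = z j).card : ℝ) / n

/-- Empirical entropy of the variables in `u` (convention `0·log₂ 0 = 0` holds automatically). -/
noncomputable def emEnt (x : Fin n → ∀ j, X j) (u : Finset (Fin d)) : ℝ :=
  -∑ z : (∀ j : u, X j.1), margP x u z * Real.logb 2 (margP x u z)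

/-! The Shapley value of `v` at `j` averages the increments `v (u ∪ {j}) - v u`, and the Shapley
weights `(card ι - 1).choose #u ⁻¹ / card ι` form a probability distribution. For a monotone
value function every increment lies between `0` and `v univ - v ∅`, and the increment at `u = ∅`
carries weight `1 / card ι`; this brackets the Shapley value of each subject. Averaging over the
subjects turns `val_t` into the empirical entropy, since `val_t(u)` is the surprisal of the
profile of `t` on `u`. -/

section Shapley

variable {ι : Type*} [Fintype ι] [DecidableEq ι]

noncomputable def shapleyValue (v : Finset ι → ℝ) (j : ι) : ℝ :=
  (Fintype.card ι : ℝ)⁻¹ * ∑ u ∈ (univ.erase j).powerset,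
    ((Fintype.card ι - 1).choose u.card : ℝ)⁻¹ * (v (insert j u) - v u)

omit [Fintype ι] [DecidableEq ι] in
theorem Finset.sum_powerset_inv_choose_card (s : Finset ι) :
    ∑ u ∈ s.powerset, ((#s).choose #u : ℝ)⁻¹ = #s + 1 := by
  rw [sum_powerset_apply_card (fun k => ((#s).choose k : ℝ)⁻¹)]
  have hterm : ∀ k ∈ range (#s + 1), (#s).choose k • ((#s).choose k : ℝ)⁻¹ = 1 := by
    intro k hk
    have hpos : ((#s).choose k : ℝ) ≠ 0 :=
      Nat.cast_ne_zero.2 (Nat.choose_pos (Nat.lt_succ_iff.1 (mem_range.1 hk))).ne'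
    rw [nsmul_eq_mul, mul_inv_cancel₀ hpos]
  rw [sum_congr rfl hterm, sum_const, card_range, nsmul_one, Nat.cast_add_one]

theorem sum_powerset_erase_inv_choose_card (j : ι) :
    ∑ u ∈ (univ.erase j).powerset, ((Fintype.card ι - 1).choose #u : ℝ)⁻¹ = Fintype.card ι := by
  have hcard : #(univ.erase j) = Fintype.card ι - 1 := by
    rw [card_erase_of_mem (mem_univ j), card_univ]
  rw [← hcard, sum_powerset_inv_choose_card, hcard, ← Nat.cast_add_one,
    Nat.sub_add_cancel (Fintype.card_pos_iff.2 ⟨j⟩)]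

variable {v : Finset ι → ℝ}

theorem sub_div_card_le_shapleyValue (hv : Monotone v) (j : ι) :
    (v {j} - v ∅) / Fintype.card ι ≤ shapleyValue v j := by
  have hinc : ∀ u ∈ (univ.erase j).powerset,
      0 ≤ ((Fintype.card ι - 1).choose #u : ℝ)⁻¹ * (v (insert j u) - v u) :=
    fun u _ => mul_nonneg (by positivity) (sub_nonneg.2 (hv (subset_insert j u)))
  have hempty := single_le_sum hinc (empty_mem_powerset (univ.erase j))
  simp only [card_empty, Nat.choose_zero_right, Nat.cast_one, inv_one, one_mul,
    insert_empty_eq] at hempty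
  rw [div_eq_inv_mul, shapleyValue]
  gcongr

theorem shapleyValue_le_sub (hv : Monotone v) (j : ι) :
    shapleyValue v j ≤ v univ - v ∅ := by
  have hcard : (Fintype.card ι : ℝ) ≠ 0 := Nat.cast_ne_zero.2 (Fintype.card_pos_iff.2 ⟨j⟩).ne'
  calc shapleyValue v j
      ≤ (Fintype.card ι : ℝ)⁻¹ *
          ∑ u ∈ (univ.erase j).powerset,
            ((Fintype.card ι - 1).choose #u : ℝ)⁻¹ * (v univ - v ∅) := by
        rw [shapleyValue]
        gcongr <;> apply hv <;> simp
    _ = v univ - v ∅ := by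
        rw [← sum_mul, sum_powerset_erase_inv_choose_card, inv_mul_cancel_left₀ hcard]

end Shapley

omit [∀ j, Fintype (X j)] in
theorem uShap_eq_shapleyValue (x : Fin n → ∀ j, X j) (t : Fin n) (j : Fin d) :
    uShap x t j = shapleyValue (uVal x t) j := by
  simp only [uShap, shapleyValue, Fintype.card_fin]

omit [∀ j, Fintype (X j)] in
theorem cohortN_pos (x : Fin n → ∀ j, X j) (t : Fin n) (u : Finset (Fin d)) :
    0 < cohortN x t u :=
  card_pos.2 ⟨t, by simp⟩

omit [∀ j, Fintype (X j)] in
theorem cohortN_antitone (x : Fin n → ∀ j, X j) (t : Fin n) : Antitone (cohortN x t) :=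
  fun _ _ h => card_le_card fun _ hi => by
    simp only [mem_filter, mem_univ, true_and] at hi ⊢
    exact fun k hk => hi k (h hk)

omit [∀ j, Fintype (X j)] in
theorem uVal_monotone (x : Fin n → ∀ j, X j) (t : Fin n) : Monotone (uVal x t) := by
  intro u v h
  have hpos : (0 : ℝ) < cohortN x t v := Nat.cast_pos.2 (cohortN_pos x t v)
  have hle : (cohortN x t v : ℝ) ≤ cohortN x t u := Nat.cast_le.2 (cohortN_antitone x t h)
  unfold uVal
  gcongr
  · norm_num
  · exact div_pos hpos (Nat.cast_pos.2 (Fin.pos t))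

omit [∀ j, Fintype (X j)] in
theorem uVal_empty (x : Fin n → ∀ j, X j) (t : Fin n) : uVal x t ∅ = 0 := by
  have hn : (n : ℝ) ≠ 0 := Nat.cast_ne_zero.2 (Fin.pos t).ne'
  simp [uVal, cohortN, hn]

omit [∀ j, Fintype (X j)] in
theorem uVal_eq_neg_logb_margP (x : Fin n → ∀ j, X j) (t : Fin n) (u : Finset (Fin d)) :
    uVal x t u = -Real.logb 2 (margP x u fun j => x t j.1) := by
  simp only [uVal, cohortN, margP, Subtype.forall]

theorem emEnt_eq_inv_mul_sum_uVal (x : Fin n → ∀ j, X j) (u : Finset (Fin d)) :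
    emEnt x u = (n : ℝ)⁻¹ * ∑ t, uVal x t u := by
  set profile : Fin n → ∀ j : u, X j.1 := fun t j => x t j.1
  have hfiber : ∀ z, #{t | profile t = z} = #{i | ∀ j : u, x i j.1 = z j} := fun z => by
    simp only [profile, funext_iff]
  simp only [uVal_eq_neg_logb_margP]
  rw [← sum_fiberwise' univ profile fun z => -Real.logb 2 (margP x u z), emEnt, mul_sum,
    ← sum_neg_distrib]
  refine sum_congr rfl fun z _ => ?_
  rw [sum_const, nsmul_eq_mul, hfiber, margP]
  ring

theorem globalUniquenessShapley_bracketing_general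
    (n d : ℕ)
    (X : Fin d → Type) [∀ j, Fintype (X j)] [∀ j, DecidableEq (X j)]
    (x : Fin n → ∀ j, X j) (j : Fin d) :
    emEnt x {j} / d ≤ uShapGlobal x j ∧ uShapGlobal x j ≤ emEnt x Finset.univ := by
  have hglobal : uShapGlobal x j = (n : ℝ)⁻¹ * ∑ t, shapleyValue (uVal x t) j := by
    simp only [uShapGlobal, uShap_eq_shapleyValue]
  rw [hglobal, emEnt_eq_inv_mul_sum_uVal, emEnt_eq_inv_mul_sum_uVal]
  constructor
  · rw [mul_div_assoc, sum_div]
    gcongr with t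
    simpa [uVal_empty] using sub_div_card_le_shapleyValue (uVal_monotone x t) j
  · gcongr with t
    simpa [uVal_empty] using shapleyValue_le_sub (uVal_monotone x t) j

/-- the bracketing inequality `𝓗({j})/d ≤ φ^{1:n}_j ≤ 𝓗({1,…,d})`. -/
theorem globalUniquenessShapley_bracketing
    (n d : ℕ) (hn : 1 ≤ n) (hd : 1 ≤ d)
    (X : Fin d → Type) [∀ j, Fintype (X j)] [∀ j, DecidableEq (X j)]
    (x : Fin n → ∀ j, X j) (j : Fin d) :
    emEnt x {j} / d ≤ uShapGlobal x j ∧ uShapGlobal x j ≤ emEnt x Finset.univ :=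
  globalUniquenessShapley_bracketing_general n d X x j
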